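/- For every integer n ≥ 3 and every 2-coloring of the edges of the complete 3-uniform hypergraph K^3_n, there is a monochromatic 2-tight component C such that |E^(2)(C)| ≥ C(n,2) − C(⌊n/2⌋, 2). -/

import Mathlib

/-!
For a vertex `a`, the color-`i` link of `a` is the graph on the other vertices joining `x, y`
when `{a, x, y}` has color `i`. The color-`1` link is the complement of the color-`0` link,
so one of them is connected; hence some color `i` has at least `⌈n/2⌉` vertices `R` with
connected color-`i` link. Walking in a connected link moves between edges through `a` that share
two vertices, so all edges through such an `a` lie in one tight component, and two vertices of `R`
are joined through an edge containing both. That component covers every pair meeting `R`, and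
there are `C(n,2) - C(n - |R|, 2) ≥ C(n,2) - C(⌊n/2⌋, 2)` of those.
-/

open Finset

/-- The `s`-shadow of a hypergraph `H`: all `s`-element vertex sets contained in
some edge of `H`. -/
def hShadow {V : Type*} [DecidableEq V] (s : ℕ) (H : Finset (Finset V)) :
    Finset (Finset V) :=
  H.biUnion fun e => e.powersetCard s

/-- One step of `t`-tight connectivity: both `a` and `b` are edges of `H` and they
share at least `t` vertices. -/
def TightStep {V : Type*} [DecidableEq V] (t : ℕ) (H : Finset (Finset V))
    (a b : Finset V) : Prop :=
  a ∈ H ∧ b ∈ H ∧ t ≤ (a ∩ b).card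

/-- Two edges lie in the same `t`-tight component iff they are joined by a chain of
edges, consecutive ones sharing at least `t` vertices. -/
def TightConn {V : Type*} [DecidableEq V] (t : ℕ) (H : Finset (Finset V)) :
    Finset V → Finset V → Prop :=
  Relation.ReflTransGen (TightStep t H)

open scoped Classical in
/-- The `t`-tight component of the edge `e` in the hypergraph `H`. -/
noncomputable def tightComponent {V : Type*} [DecidableEq V] (t : ℕ)
    (H : Finset (Finset V)) (e : Finset V) : Finset (Finset V) :=
  H.filter fun f => TightConn t H e f

/-- The `k`-uniform hypergraph `H i` of edges of `K^k_n` having color `i` under the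
coloring `c`. -/
def colorClass (n r k : ℕ) (c : Finset (Fin n) → Fin r) (i : Fin r) :
    Finset (Finset (Fin n)) :=
  (Finset.univ.powersetCard k).filter fun e => c e = i

/-- `M(n,r,k,t,s;c)`: the largest number of vertex `s`-sets contained in the edges of
a monochromatic `t`-tight component of the `r`-coloring `c` of `K^k_n`. -/
noncomputable def Mcol (n r k t s : ℕ) (c : Finset (Fin n) → Fin r) : ℕ :=
  Finset.univ.sup fun i : Fin r =>
    (colorClass n r k c i).sup fun e =>
      (hShadow s (tightComponent t (colorClass n r k c i) e)).card

/-- `M(n,r,k,t,s)`: the minimum of `M(n,r,k,t,s;c)` over all `r`-colorings `c` of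
`K^k_n`. -/
noncomputable def Mmin (n r k t s : ℕ) : ℕ :=
  sInf {m | ∃ c : Finset (Fin n) → Fin r, Mcol n r k t s c = m}

open Finset SimpleGraph

section Hypergraph

variable {V : Type*} [DecidableEq V] {H : Finset (Finset V)}

instance (t : ℕ) (H : Finset (Finset V)) : Std.Symm (TightStep t H) :=
  ⟨fun _ _ ⟨ha, hb, hab⟩ => ⟨hb, ha, by rwa [inter_comm]⟩⟩

theorem TightConn.symm {t : ℕ} {e f : Finset V} (h : TightConn t H e f) :
    TightConn t H f e :=
  Relation.ReflTransGen.stdSymm.symm _ _ h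

theorem mem_tightComponent {t : ℕ} {e f : Finset V} :
    f ∈ tightComponent t H e ↔ f ∈ H ∧ TightConn t H e f := by
  simp [tightComponent]

theorem tightStep_two_of_pair_subset {a b : V} {e f : Finset V} (hab : a ≠ b)
    (he : e ∈ H) (hf : f ∈ H) (hae : {a, b} ⊆ e) (haf : {a, b} ⊆ f) :
    TightStep 2 H e f :=
  ⟨he, hf, (card_pair hab).symm.le.trans (card_le_card (subset_inter hae haf))⟩

def link (H : Finset (Finset V)) (a : V) : SimpleGraph {x // x ≠ a} where
  Adj x y := x ≠ y ∧ {a, x.1, y.1} ∈ H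
  symm := ⟨fun _ _ h => ⟨h.1.symm, by rw [pair_comm]; exact h.2⟩⟩
  loopless := ⟨fun _ h => h.1 rfl⟩

variable {a : V}

@[simp]
theorem link_adj {x y : {x // x ≠ a}} : (link H a).Adj x y ↔ x ≠ y ∧ {a, x.1, y.1} ∈ H :=
  Iff.rfl

theorem tightStep_of_link_adj {x y u : {x // x ≠ a}} (hxy : (link H a).Adj x y)
    (hyu : (link H a).Adj y u) : TightStep 2 H {a, x.1, y.1} {a, y.1, u.1} :=
  tightStep_two_of_pair_subset y.2.symm hxy.2 hyu.2 (by simp [insert_subset_iff])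
    (by simp [insert_subset_iff])

theorem tightConn_of_link_walk {y z : {x // x ≠ a}} (p : (link H a).Walk y z) :
    ∀ {x w : {x // x ≠ a}}, (link H a).Adj x y → (link H a).Adj z w →
      TightConn 2 H {a, x.1, y.1} {a, z.1, w.1} := by
  induction p with
  | nil => exact fun hxy hyw => .single (tightStep_of_link_adj hxy hyw)
  | cons hyu _ ih => exact fun hxy hzw => .head (tightStep_of_link_adj hxy hyu) (ih hyu hzw)

theorem tightConn_of_preconnected_link (h : (link H a).Preconnected)
    {x y z w : {x // x ≠ a}} (hxy : (link H a).Adj x y) (hzw : (link H a).Adj z w) :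
    TightConn 2 H {a, x.1, y.1} {a, z.1, w.1} :=
  let ⟨p⟩ := h y z
  tightConn_of_link_walk p hxy hzw

variable [Fintype V]

theorem nontrivial_subtype_ne (hV : 2 < Fintype.card V) (a : V) : Nontrivial {x // x ≠ a} := by
  rw [← Fintype.one_lt_card_iff_nontrivial, Fintype.card_subtype_compl, Fintype.card_subtype_eq]
  omega

theorem exists_tightConn_mem_of_preconnected_link (hV : 2 < Fintype.card V)
    (h : (link H a).Preconnected) {x y : {x // x ≠ a}} (hxy : (link H a).Adj x y) {v : V}
    (hv : v ≠ a) : ∃ f ∈ H, TightConn 2 H {a, x.1, y.1} f ∧ a ∈ f ∧ v ∈ f := by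
  have := nontrivial_subtype_ne hV a
  obtain ⟨w, hvw⟩ := h.exists_adj_of_nontrivial ⟨v, hv⟩
  exact ⟨_, hvw.2, tightConn_of_preconnected_link h hxy hvw, by simp, by simp⟩

theorem tightConn_of_preconnected_links (hV : 2 < Fintype.card V) {b : V}
    (ha : (link H a).Preconnected) (hb : (link H b).Preconnected) {x y : {x // x ≠ a}}
    {z w : {x // x ≠ b}} (hxy : (link H a).Adj x y) (hzw : (link H b).Adj z w) :
    TightConn 2 H {a, x.1, y.1} {b, z.1, w.1} := by
  obtain rfl | hab := eq_or_ne a b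
  · exact tightConn_of_preconnected_link ha hxy hzw
  obtain ⟨f, hf, hef, haf, hbf⟩ := exists_tightConn_mem_of_preconnected_link hV ha hxy hab.symm
  obtain ⟨g, hg, hgf, hbg, hag⟩ := exists_tightConn_mem_of_preconnected_link hV hb hzw hab
  have hfg : TightStep 2 H f g := tightStep_two_of_pair_subset hab hf hg
    (by simp [insert_subset_iff, haf, hbf]) (by simp [insert_subset_iff, hag, hbg])
  exact (hef.tail hfg).trans hgf.symm

theorem pair_mem_hShadow_tightComponent (hV : 2 < Fintype.card V) {b v : V}
    (ha : (link H a).Preconnected) (hb : (link H b).Preconnected) {x y : {x // x ≠ a}}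
    (hxy : (link H a).Adj x y) (hv : v ≠ b) :
    {b, v} ∈ hShadow 2 (tightComponent 2 H {a, x.1, y.1}) := by
  have := nontrivial_subtype_ne hV b
  obtain ⟨w, hvw⟩ := hb.exists_adj_of_nontrivial ⟨v, hv⟩
  refine mem_biUnion.2 ⟨{b, v, w.1}, ?_, ?_⟩
  · exact mem_tightComponent.2 ⟨hvw.2, tightConn_of_preconnected_links hV ha hb hxy hvw⟩
  · exact mem_powersetCard.2 ⟨by simp [insert_subset_iff], card_pair hv.symm⟩

theorem filter_not_disjoint_subset_hShadow (hV : 2 < Fintype.card V) {R : Finset V}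
    (hR : ∀ b ∈ R, (link H b).Preconnected) (ha : a ∈ R) {x y : {x // x ≠ a}}
    (hxy : (link H a).Adj x y) :
    (univ.powersetCard 2).filter (fun p => ¬ Disjoint p R) ⊆
      hShadow 2 (tightComponent 2 H {a, x.1, y.1}) := by
  intro p hp
  obtain ⟨hp2, hpR⟩ := mem_filter.1 hp
  obtain ⟨u, v, huv, rfl⟩ := card_eq_two.1 (mem_powersetCard.1 hp2).2
  obtain ⟨b, hb, hbR⟩ := not_disjoint_iff.1 hpR
  rcases mem_insert.1 hb with rfl | hb
  · exact pair_mem_hShadow_tightComponent hV (hR a ha) (hR b hbR) hxy huv.symm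
  · obtain rfl := mem_singleton.1 hb
    rw [pair_comm u]
    exact pair_mem_hShadow_tightComponent hV (hR a ha) (hR b hbR) hxy huv

theorem card_filter_not_disjoint_powersetCard (R : Finset V) (k : ℕ) :
    #((univ.powersetCard k).filter fun p => ¬ Disjoint p R) =
      (Fintype.card V).choose k - (Fintype.card V - #R).choose k := by
  have hdisj : (univ.powersetCard k).filter (fun p => Disjoint p R) = Rᶜ.powersetCard k := by
    ext p
    simp [subset_compl_iff_disjoint_right, and_comm]
  have := card_filter_add_card_filter_not (s := univ.powersetCard k) (p := fun p => Disjoint p R)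
  rw [hdisj, card_powersetCard, card_powersetCard, card_compl, card_univ] at this
  omega

end Hypergraph

theorem mem_colorClass {n r k : ℕ} {c : Finset (Fin n) → Fin r} {i : Fin r}
    {e : Finset (Fin n)} : e ∈ colorClass n r k c i ↔ e.card = k ∧ c e = i := by
  simp [colorClass, mem_powersetCard]

theorem link_colorClass_one {n : ℕ} (c : Finset (Fin n) → Fin 2) (a : Fin n) :
    link (colorClass n 2 3 c 1) a = (link (colorClass n 2 3 c 0) a)ᶜ := by
  ext x y
  simp only [link_adj, compl_adj, mem_colorClass]
  by_cases hxy : x = y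
  · simp [hxy]
  have h3 : #{a, x.1, y.1} = 3 :=
    card_eq_three.2 ⟨_, _, _, x.2.symm, y.2.symm, Subtype.coe_ne_coe.2 hxy, rfl⟩
  simp only [hxy, h3, ne_eq, not_false_eq_true, true_and]
  omega

theorem exists_colorClass_many_preconnected_links {n : ℕ} (c : Finset (Fin n) → Fin 2) :
    ∃ i, ∃ R : Finset (Fin n), n - n / 2 ≤ #R ∧
      ∀ a ∈ R, (link (colorClass n 2 3 c i) a).Preconnected := by
  classical
  let R (i : Fin 2) := univ.filter fun a => (link (colorClass n 2 3 c i) a).Preconnected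
  have hcover : univ ⊆ R 0 ∪ R 1 := fun a _ => by
    rcases (link (colorClass n 2 3 c 0) a).connected_or_preconnected_compl with h | h
    · simp [R, h.preconnected]
    · simp [R, link_colorClass_one, h]
  have hn := (card_le_card hcover).trans (card_union_le _ _)
  rw [card_univ, Fintype.card_fin] at hn
  by_cases h0 : n - n / 2 ≤ #(R 0)
  · exact ⟨0, R 0, h0, fun a ha => (mem_filter.1 ha).2⟩
  · exact ⟨1, R 1, by omega, fun a ha => (mem_filter.1 ha).2⟩

/-- For every `n ≥ 3` and every 2-coloring of `K^3_n`, there is a monochromatic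
2-tight component `C` with `|E^(2)(C)| ≥ C(n,2) - C(⌊n/2⌋,2)`. -/
theorem statement18 (n : ℕ) (hn : 3 ≤ n) (c : Finset (Fin n) → Fin 2) :
    ∃ i : Fin 2, ∃ e ∈ colorClass n 2 3 c i,
      n.choose 2 - (n / 2).choose 2 ≤
        (hShadow 2 (tightComponent 2 (colorClass n 2 3 c i) e)).card := by
  have hV : 2 < Fintype.card (Fin n) := by rw [Fintype.card_fin]; omega
  obtain ⟨i, R, hRcard, hR⟩ := exists_colorClass_many_preconnected_links c
  obtain ⟨a, ha⟩ : R.Nonempty := card_pos.1 (by omega)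
  have := nontrivial_subtype_ne hV a
  obtain ⟨x⟩ : Nonempty {x // x ≠ a} := inferInstance
  obtain ⟨y, hxy⟩ := (hR a ha).exists_adj_of_nontrivial x
  refine ⟨i, {a, x.1, y.1}, hxy.2, ?_⟩
  calc n.choose 2 - (n / 2).choose 2 ≤ n.choose 2 - (n - #R).choose 2 :=
        Nat.sub_le_sub_left (Nat.choose_le_choose 2 (by omega)) _
    _ = #((univ.powersetCard 2).filter fun p => ¬ Disjoint p R) := by
        rw [card_filter_not_disjoint_powersetCard, Fintype.card_fin]
    _ ≤ _ := card_le_card (filter_not_disjoint_subset_hShadow hV hR ha hxy)
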